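/- The function r ↦ log(U(r)), where U is the normalized sigmoidal utility function, is strictly concave on (0, ∞). -/

import Mathlib

/-!
Since `c * (1 / (1 + e^{-a(r-b)}) - d) = (1 - e^{-ar}) / (1 + e^{-a(r-b)})`, the function `log U` is
`log (1 - e^{-ar})` minus the softplus `log (1 + e^t)` evaluated at `t = -a(r-b)`. The first term is the
logarithm of a positive strictly concave function, hence strictly concave; the softplus is convex
because its derivative is the sigmoid, which is increasing.
-/

open Real Set

theorem ConvexOn.comp_mul_add {f : ℝ → ℝ} (hf : ConvexOn ℝ univ f) (a b : ℝ) :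
    ConvexOn ℝ univ fun x => f (a * x + b) := by
  refine ⟨convex_univ, fun x _ y _ θ μ hθ hμ hθμ => ?_⟩
  calc f (a * (θ • x + μ • y) + b) = f (θ • (a * x + b) + μ • (a * y + b)) := by
        congr 1; simp only [smul_eq_mul]; linear_combination b * hθμ.symm
    _ ≤ _ := hf.2 (mem_univ _) (mem_univ _) hθ hμ hθμ

theorem StrictConvexOn.comp_mul_add {f : ℝ → ℝ} (hf : StrictConvexOn ℝ univ f) {a : ℝ}
    (ha : a ≠ 0) (b : ℝ) : StrictConvexOn ℝ univ fun x => f (a * x + b) := by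
  refine ⟨convex_univ, fun x _ y _ hxy θ μ hθ hμ hθμ => ?_⟩
  have hne : a * x + b ≠ a * y + b := by simpa [ha] using hxy
  calc f (a * (θ • x + μ • y) + b) = f (θ • (a * x + b) + μ • (a * y + b)) := by
        congr 1; simp only [smul_eq_mul]; linear_combination b * hθμ.symm
    _ < _ := hf.2 (mem_univ _) (mem_univ _) hne hθ hμ hθμ

theorem StrictConcaveOn.log {E : Type*} [AddCommMonoid E] [SMul ℝ E] {s : Set E} {f : E → ℝ} (hf : StrictConcaveOn ℝ s f)
    (hpos : ∀ x ∈ s, 0 < f x) : StrictConcaveOn ℝ s fun x => Real.log (f x) := by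
  refine ⟨hf.1, fun x hx y hy hxy θ μ hθ hμ hθμ => ?_⟩
  have hcomb : 0 < θ • f x + μ • f y := by
    have := hpos x hx; have := hpos y hy; simp only [smul_eq_mul]; positivity
  calc θ • Real.log (f x) + μ • Real.log (f y) ≤ Real.log (θ • f x + μ • f y) :=
        strictConcaveOn_log_Ioi.concaveOn.2 (hpos x hx) (hpos y hy) hθ.le hμ.le hθμ
    _ < Real.log (f (θ • x + μ • y)) := Real.log_lt_log hcomb (hf.2 hx hy hxy hθ hμ hθμ)

theorem hasDerivAt_log_one_add_exp (x : ℝ) :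
    HasDerivAt (fun x => Real.log (1 + exp x)) (sigmoid x) x := by
  have h := ((hasDerivAt_exp x).const_add 1).log (by positivity)
  convert h using 1
  rw [sigmoid_def, exp_neg]
  field_simp
  ring

theorem convexOn_log_one_add_exp : ConvexOn ℝ univ fun x => Real.log (1 + exp x) :=
  Monotone.convexOn_univ_of_deriv (fun x => (hasDerivAt_log_one_add_exp x).differentiableAt)
    (by rw [funext fun x => (hasDerivAt_log_one_add_exp x).deriv]; exact sigmoid_monotone)

theorem one_sub_exp_neg_mul_pos {a r : ℝ} (ha : 0 < a) (hr : 0 < r) : 0 < 1 - exp (-a * r) :=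
  sub_pos.2 (exp_lt_one_iff.2 (by nlinarith))

theorem strictConcaveOn_log_one_sub_exp_neg_mul {a : ℝ} (ha : 0 < a) :
    StrictConcaveOn ℝ (Ioi 0) fun r => Real.log (1 - exp (-a * r)) := by
  have hconc : StrictConcaveOn ℝ (Ioi 0) fun r => 1 - exp (-a * r) :=
    ((concaveOn_const 1 convex_univ).sub_strictConvexOn
      (strictConvexOn_exp.comp_mul_add (neg_ne_zero.2 ha.ne') 0)).subset (subset_univ _)
      (convex_Ioi 0) |>.congr fun r _ => by simp
  exact hconc.log fun r hr => one_sub_exp_neg_mul_pos ha hr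

theorem log_sigmoid_utility_strictConcave_general (a b : ℝ) (ha : 0 < a)
    (c d : ℝ) (U : ℝ → ℝ)
    (hc : c = (1 + Real.exp (a * b)) / Real.exp (a * b))
    (hd : d = 1 / (1 + Real.exp (a * b)))
    (hU : ∀ r, U r = c * (1 / (1 + Real.exp (-a * (r - b))) - d)) :
    StrictConcaveOn ℝ (Set.Ioi (0 : ℝ)) (fun r => Real.log (U r)) := by
  have hU_div : ∀ r, U r = (1 - exp (-a * r)) / (1 + exp (-a * r + a * b)) := by
    intro r
    have hsplit : exp (-a * r + a * b) = exp (-a * r) * exp (a * b) := exp_add _ _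
    rw [hU, hc, hd, show -a * (r - b) = -a * r + a * b by ring, hsplit]
    field_simp
    ring
  have hlogU : EqOn (fun r => Real.log (1 - exp (-a * r)) - Real.log (1 + exp (-a * r + a * b)))
      (fun r => Real.log (U r)) (Ioi 0) := fun r hr => by
    simp only [hU_div]
    rw [Real.log_div (one_sub_exp_neg_mul_pos ha hr).ne' (by positivity)]
  exact ((strictConcaveOn_log_one_sub_exp_neg_mul ha).sub_convexOn
    ((convexOn_log_one_add_exp.comp_mul_add (-a) (a * b)).subset (subset_univ _)
      (convex_Ioi 0))).congr hlogU

theorem log_sigmoid_utility_strictConcave (a b : ℝ) (ha : 0 < a) (hb : 0 < b)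
    (c d : ℝ) (U : ℝ → ℝ)
    (hc : c = (1 + Real.exp (a * b)) / Real.exp (a * b))
    (hd : d = 1 / (1 + Real.exp (a * b)))
    (hU : ∀ r, U r = c * (1 / (1 + Real.exp (-a * (r - b))) - d))
    (hUpos : ∀ r ∈ Set.Ioi (0 : ℝ), 0 < U r) :
    StrictConcaveOn ℝ (Set.Ioi (0 : ℝ)) (fun r => Real.log (U r)) :=
  log_sigmoid_utility_strictConcave_general a b ha c d U hc hd hU
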